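/- Let h ∈ Σ_N, let C_X ∈ ℝ^{N×N} be symmetric and either CPD or CND, and let G(T) = min over C̄ ∈ ℝ^{n×n} of ∑_{ijkl} ([C_X]_{ik} − C̄_{jl})² T_{ij} T_{kl}. Then G is concave on the semi-relaxed coupling polytope U_n(h) = {T ∈ ℝ_+^{N×n} : T 1_n = h}. -/

import Mathlib

/-!
Expanding the square and minimising entrywise in `C̄` gives
`G(T) = ∑ᵢₖ C_ik² hᵢ hₖ - ∑ⱼₗ A_jl² / (sⱼ sₗ)`, where `A = Tᵀ C T` and `s` are the column sums
of `T`; the subtracted term is `Tr (P C P C)` for `P = T diag(s)⁻¹ Tᵀ`, so it suffices that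
`T ↦ Tr (P C P C)` is convex on `U_n(h)`. Three facts combine: `T ↦ P` is convex in the Loewner
order (its quadratic form is a sum of perspectives `u² / s`); `P ↦ Tr (P C P C)` is monotone on
positive semidefinite matrices; and it is convex along the segment between `P₀` and `P₁`, which
share their row sums, because `Tr (Y C Y C) ≥ 0` for `Y = P₀ - P₁`: projecting onto `1ᗮ` turns the
conditionally positive `C` into a positive semidefinite one without changing this trace. The
conditionally negative case follows by replacing `C` with `-C`.
-/

open Matrix Finset

theorem two_mul_mul_sub_mul_sq_le_sq_div {s u : ℝ} (hs : 0 ≤ s) (hu : s = 0 → u = 0) (c : ℝ) :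
    2 * c * u - s * c ^ 2 ≤ u ^ 2 / s := by
  rcases hs.eq_or_lt with rfl | hs
  · simp [hu rfl]
  · rw [le_div_iff₀ hs]
    nlinarith [sq_nonneg (s * c - u)]

theorem two_mul_div_mul_sub_mul_div_sq {s u : ℝ} (hu : s = 0 → u = 0) :
    2 * (u / s) * u - s * (u / s) ^ 2 = u ^ 2 / s := by
  rcases eq_or_ne s 0 with rfl | hs
  · simp [hu rfl]
  · field_simp
    ring

theorem mul_add_mul_sq_div_le {s₀ s₁ u₀ u₁ a b : ℝ} (hs₀ : 0 ≤ s₀) (hs₁ : 0 ≤ s₁)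
    (hu₀ : s₀ = 0 → u₀ = 0) (hu₁ : s₁ = 0 → u₁ = 0) (ha : 0 ≤ a) (hb : 0 ≤ b) :
    (a * u₀ + b * u₁) ^ 2 / (a * s₀ + b * s₁) ≤ a * (u₀ ^ 2 / s₀) + b * (u₁ ^ 2 / s₁) := by
  have hu : a * s₀ + b * s₁ = 0 → a * u₀ + b * u₁ = 0 := fun h => by
    obtain ⟨h₀, h₁⟩ := (add_eq_zero_iff_of_nonneg (by positivity) (by positivity)).1 h
    have hmul : ∀ {a s u : ℝ}, (s = 0 → u = 0) → a * s = 0 → a * u = 0 := fun hu h => by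
      rcases mul_eq_zero.1 h with rfl | hs
      · exact zero_mul _
      · rw [hu hs, mul_zero]
    rw [hmul hu₀ h₀, hmul hu₁ h₁, add_zero]
  set c := (a * u₀ + b * u₁) / (a * s₀ + b * s₁)
  rw [← two_mul_div_mul_sub_mul_div_sq hu]
  calc 2 * c * (a * u₀ + b * u₁) - (a * s₀ + b * s₁) * c ^ 2
      = a * (2 * c * u₀ - s₀ * c ^ 2) + b * (2 * c * u₁ - s₁ * c ^ 2) := by ring
    _ ≤ a * (u₀ ^ 2 / s₀) + b * (u₁ ^ 2 / s₁) := by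
      gcongr
      · exact two_mul_mul_sub_mul_sq_le_sq_div hs₀ hu₀ c
      · exact two_mul_mul_sub_mul_sq_le_sq_div hs₁ hu₁ c

namespace Matrix

variable {ι : Type*} [Fintype ι]

open scoped MatrixOrder in
theorem PosSemidef.trace_mul_nonneg {P Q : Matrix ι ι ℝ} (hP : P.PosSemidef)
    (hQ : Q.PosSemidef) : 0 ≤ (P * Q).trace := by
  classical
  set R := CFC.sqrt Q
  have hR : Rᴴ = R := (nonneg_iff_posSemidef.mp (CFC.sqrt_nonneg Q)).isHermitian.eq
  have hRR : R * R = Q := CFC.sqrt_mul_sqrt_self Q hQ.nonneg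
  calc 0 ≤ (Rᴴ * P * R).trace := (hP.conjTranspose_mul_mul_same R).trace_nonneg
    _ = (P * Q).trace := by
      rw [hR, ← hRR, Matrix.mul_assoc, trace_mul_comm, Matrix.mul_assoc]

theorem PosSemidef.trace_mul_mul_mul_le {C P Q : Matrix ι ι ℝ} (hC : Cᵀ = C)
    (hP : P.PosSemidef) (hPQ : (Q - P).PosSemidef) :
    (P * C * P * C).trace ≤ (Q * C * Q * C).trace := by
  have hQ : Q.PosSemidef := by simpa using hP.add hPQ
  have hconj : ∀ {M : Matrix ι ι ℝ}, M.PosSemidef → (C * M * C).PosSemidef := fun hM => by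
    simpa [hC] using hM.conjTranspose_mul_mul_same C
  have h₁ := hPQ.trace_mul_nonneg (hconj hQ)
  have h₂ := hP.trace_mul_nonneg (hconj hPQ)
  have key : (Q * C * Q * C).trace - (P * C * P * C).trace
      = ((Q - P) * (C * Q * C)).trace + (P * (C * (Q - P) * C)).trace := by
    simp only [Matrix.sub_mul, Matrix.mul_sub, trace_sub, Matrix.mul_assoc]
    ring
  linarith

def CondPosSemidef (C : Matrix ι ι ℝ) : Prop :=
  ∀ x : ι → ℝ, ∑ i, x i = 0 → 0 ≤ x ⬝ᵥ C *ᵥ x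

section Centering

variable [DecidableEq ι]

noncomputable def centeringMatrix (ι : Type*) [Fintype ι] [DecidableEq ι] : Matrix ι ι ℝ :=
  1 - (Fintype.card ι : ℝ)⁻¹ • of fun _ _ => 1

theorem centeringMatrix_transpose : (centeringMatrix ι)ᵀ = centeringMatrix ι := by
  ext i j
  simp [centeringMatrix, one_apply, eq_comm]

theorem sum_centeringMatrix_mulVec (x : ι → ℝ) : ∑ i, (centeringMatrix ι *ᵥ x) i = 0 := by
  rcases isEmpty_or_nonempty ι with hι | hι
  · simp
  · have hE : centeringMatrix ι *ᵥ x = x - fun _ => (Fintype.card ι : ℝ)⁻¹ * ∑ j, x j := by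
      ext i
      simp [centeringMatrix, mulVec, dotProduct, mul_sum, sub_mul, sum_sub_distrib, one_apply]
    simp [hE, sum_sub_distrib]

theorem mul_centeringMatrix {Y : Matrix ι ι ℝ} (hY : ∀ i, ∑ j, Y i j = 0) :
    Y * centeringMatrix ι = Y := by
  have hJ : Y * of (fun _ _ => 1) = 0 := by
    ext i j
    simp [mul_apply, hY]
  rw [centeringMatrix, Matrix.mul_sub, Matrix.mul_one, Matrix.mul_smul, hJ, smul_zero, sub_zero]

theorem centeringMatrix_mul {Y : Matrix ι ι ℝ} (hY : ∀ j, ∑ i, Y i j = 0) :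
    centeringMatrix ι * Y = Y := by
  have hJ : of (fun _ _ => 1) * Y = 0 := by
    ext i j
    simp [mul_apply, hY]
  rw [centeringMatrix, Matrix.sub_mul, Matrix.one_mul, Matrix.smul_mul, hJ, smul_zero, sub_zero]

theorem CondPosSemidef.posSemidef_centeringMatrix_mul_mul {C : Matrix ι ι ℝ}
    (hC : C.CondPosSemidef) (hCs : Cᵀ = C) :
    (centeringMatrix ι * C * centeringMatrix ι).PosSemidef := by
  refine .of_dotProduct_mulVec_nonneg ?_ fun x => ?_
  · rw [IsHermitian, conjTranspose_eq_transpose_of_trivial, transpose_mul, transpose_mul,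
      centeringMatrix_transpose, hCs, Matrix.mul_assoc]
  · have := hC _ (sum_centeringMatrix_mulVec x)
    rwa [star_trivial, ← mulVec_mulVec, ← mulVec_mulVec, dotProduct_mulVec,
      ← mulVec_transpose, centeringMatrix_transpose]

end Centering

theorem CondPosSemidef.trace_mul_mul_mul_nonneg {C Y : Matrix ι ι ℝ} (hC : C.CondPosSemidef)
    (hCs : Cᵀ = C) (hY : Yᵀ = Y) (hY₁ : ∀ i, ∑ j, Y i j = 0) :
    0 ≤ (Y * C * Y * C).trace := by
  classical
  set E := centeringMatrix ι
  have hYE : Y * E = Y := mul_centeringMatrix hY₁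
  have hEY : E * Y = Y := centeringMatrix_mul fun j => by
    rw [← hY]
    exact hY₁ j
  have hEYE : E * Y * E = Y := by rw [hEY, hYE]
  have hE := hC.posSemidef_centeringMatrix_mul_mul hCs
  have hYEY : (Y * (E * C * E) * Y).PosSemidef := by
    have := hE.conjTranspose_mul_mul_same Y
    rwa [conjTranspose_eq_transpose_of_trivial, hY] at this
  calc 0 ≤ (Y * (E * C * E) * Y * (E * C * E)).trace := hYEY.trace_mul_nonneg hE
    _ = (Y * C * Y * C).trace := by
      rw [show Y * (E * C * E) * Y * (E * C * E) = (Y * E * C * E * Y * E * C) * E by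
          simp only [Matrix.mul_assoc], trace_mul_comm,
        show E * (Y * E * C * E * Y * E * C) = (E * Y * E) * C * (E * Y * E) * C by
          simp only [Matrix.mul_assoc], hEYE]

theorem CondPosSemidef.trace_convexComb_le {C P₀ P₁ : Matrix ι ι ℝ} (hC : C.CondPosSemidef)
    (hCs : Cᵀ = C) (hP₀ : P₀ᵀ = P₀) (hP₁ : P₁ᵀ = P₁) (hrow : ∀ i, ∑ j, P₀ i j = ∑ j, P₁ i j)
    {a b : ℝ} (ha : 0 ≤ a) (hb : 0 ≤ b) (hab : a + b = 1) :
    ((a • P₀ + b • P₁) * C * (a • P₀ + b • P₁) * C).trace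
      ≤ a * (P₀ * C * P₀ * C).trace + b * (P₁ * C * P₁ * C).trace := by
  have hY := hC.trace_mul_mul_mul_nonneg hCs (Y := P₀ - P₁) (by rw [transpose_sub, hP₀, hP₁])
    fun i => by simp [sum_sub_distrib, hrow]
  have hcomm : (P₀ * C * P₁ * C).trace = (P₁ * C * P₀ * C).trace := by
    rw [show P₀ * C * P₁ * C = (P₀ * C) * (P₁ * C) by simp only [Matrix.mul_assoc],
      trace_mul_comm]
    simp only [Matrix.mul_assoc]
  obtain rfl : b = 1 - a := by linarith
  have key : a * (P₀ * C * P₀ * C).trace + (1 - a) * (P₁ * C * P₁ * C).trace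
      - ((a • P₀ + (1 - a) • P₁) * C * (a • P₀ + (1 - a) • P₁) * C).trace
      = a * (1 - a) * ((P₀ - P₁) * C * (P₀ - P₁) * C).trace := by
    simp only [Matrix.add_mul, Matrix.mul_add, Matrix.sub_mul, Matrix.mul_sub, Matrix.smul_mul,
      Matrix.mul_smul, trace_add, trace_sub, trace_smul, smul_eq_mul, hcomm]
    ring
  nlinarith [mul_nonneg (mul_nonneg ha hb) hY]

end Matrix

section Coupling

variable {ι κ : Type*} [Fintype ι]

theorem sum_mul_eq_zero_of_sum_eq_zero {T : Matrix ι κ ℝ} (hT : ∀ i j, 0 ≤ T i j) {j : κ}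
    (hj : ∑ i, T i j = 0) (x : ι → ℝ) : ∑ i, T i j * x i = 0 :=
  sum_eq_zero fun i _ => by
    rw [(sum_eq_zero_iff_of_nonneg fun i _ => hT i j).1 hj i (mem_univ i), zero_mul]

theorem transpose_mul_mul_apply_eq_zero {T : Matrix ι κ ℝ} (hT : ∀ i j, 0 ≤ T i j)
    (C : Matrix ι ι ℝ) {j l : κ} (h : (∑ i, T i j) * ∑ i, T i l = 0) :
    (Tᵀ * C * T) j l = 0 := by
  rcases mul_eq_zero.1 h with hj | hl
  · rw [Matrix.mul_assoc, mul_apply]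
    exact sum_mul_eq_zero_of_sum_eq_zero hT hj _
  · rw [mul_apply]
    simpa only [mul_comm] using sum_mul_eq_zero_of_sum_eq_zero hT hl (fun k => (Tᵀ * C) j k)

variable [Fintype κ] [DecidableEq κ]

-- Columns of `T` with zero mass contribute nothing, as `(0 : ℝ)⁻¹ = 0`.
noncomputable def couplingGram (T : Matrix ι κ ℝ) : Matrix ι ι ℝ :=
  T * diagonal (fun j => (∑ i, T i j)⁻¹) * Tᵀ

theorem couplingGram_transpose (T : Matrix ι κ ℝ) : (couplingGram T)ᵀ = couplingGram T := by
  simp [couplingGram, transpose_mul, Matrix.mul_assoc]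

theorem couplingGram_apply (T : Matrix ι κ ℝ) (i m : ι) :
    couplingGram T i m = ∑ j, T i j * T m j / ∑ i', T i' j := by
  rw [couplingGram, mul_apply]
  simp [mul_diagonal, div_eq_mul_inv, mul_right_comm]

theorem dotProduct_couplingGram_mulVec (T : Matrix ι κ ℝ) (x : ι → ℝ) :
    x ⬝ᵥ couplingGram T *ᵥ x = ∑ j, (∑ i, T i j * x i) ^ 2 / ∑ i, T i j := by
  rw [couplingGram, ← mulVec_mulVec, ← mulVec_mulVec, dotProduct_mulVec, ← mulVec_transpose]
  simp only [dotProduct, mulVec_diagonal]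
  refine sum_congr rfl fun j _ => ?_
  simp only [mulVec, dotProduct, transpose_apply]
  ring

theorem couplingGram_posSemidef {T : Matrix ι κ ℝ} (hT : ∀ i j, 0 ≤ T i j) :
    (couplingGram T).PosSemidef := by
  refine .of_dotProduct_mulVec_nonneg (by simp [IsHermitian, couplingGram_transpose]) fun x => ?_
  rw [star_trivial, dotProduct_couplingGram_mulVec]
  exact sum_nonneg fun j _ => div_nonneg (sq_nonneg _) (sum_nonneg fun i _ => hT i j)

theorem sum_couplingGram_apply {T : Matrix ι κ ℝ} (hT : ∀ i j, 0 ≤ T i j) (i : ι) :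
    ∑ m, couplingGram T i m = ∑ j, T i j := by
  simp only [couplingGram_apply]
  rw [sum_comm]
  refine sum_congr rfl fun j _ => ?_
  rw [← sum_div, ← mul_sum]
  rcases eq_or_ne (∑ i', T i' j) 0 with hj | hj
  · simp [hj, (sum_eq_zero_iff_of_nonneg fun i _ => hT i j).1 hj i (mem_univ i)]
  · exact mul_div_cancel_right₀ _ hj

theorem posSemidef_smul_couplingGram_add_sub {T₀ T₁ : Matrix ι κ ℝ} (hT₀ : ∀ i j, 0 ≤ T₀ i j)
    (hT₁ : ∀ i j, 0 ≤ T₁ i j) {a b : ℝ} (ha : 0 ≤ a) (hb : 0 ≤ b) :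
    (a • couplingGram T₀ + b • couplingGram T₁ - couplingGram (a • T₀ + b • T₁)).PosSemidef := by
  refine .of_dotProduct_mulVec_nonneg ?_ fun x => ?_
  · simp [IsHermitian, couplingGram_transpose]
  · rw [star_trivial, sub_mulVec, add_mulVec, smul_mulVec, smul_mulVec, dotProduct_sub,
      dotProduct_add, dotProduct_smul, dotProduct_smul, smul_eq_mul, smul_eq_mul, sub_nonneg,
      dotProduct_couplingGram_mulVec, dotProduct_couplingGram_mulVec,
      dotProduct_couplingGram_mulVec, mul_sum, mul_sum, ← sum_add_distrib]
    refine sum_le_sum fun j _ => ?_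
    simp only [Matrix.add_apply, Matrix.smul_apply, smul_eq_mul, add_mul, sum_add_distrib,
      ← mul_sum, mul_assoc]
    exact mul_add_mul_sq_div_le (sum_nonneg fun i _ => hT₀ i j) (sum_nonneg fun i _ => hT₁ i j)
      (sum_mul_eq_zero_of_sum_eq_zero hT₀ · x) (sum_mul_eq_zero_of_sum_eq_zero hT₁ · x) ha hb

theorem trace_couplingGram_mul_mul_mul {C : Matrix ι ι ℝ} (hC : Cᵀ = C) (T : Matrix ι κ ℝ) :
    (couplingGram T * C * couplingGram T * C).trace
      = ∑ j, ∑ l, (Tᵀ * C * T) j l ^ 2 / ((∑ i, T i j) * ∑ i, T i l) := by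
  set A := Tᵀ * C * T
  set D : Matrix κ κ ℝ := diagonal fun j => (∑ i, T i j)⁻¹
  have hAt : Aᵀ = A := by simp [A, transpose_mul, hC, Matrix.mul_assoc]
  have hA : ∀ j l, A l j = A j l := fun j l => congrFun (congrFun hAt j) l
  calc (couplingGram T * C * couplingGram T * C).trace = (D * A * (D * A)).trace := by
        rw [couplingGram, show T * D * Tᵀ * C * (T * D * Tᵀ) * C
          = T * (D * Tᵀ * C * T * D * Tᵀ * C) by simp only [Matrix.mul_assoc], trace_mul_comm]
        simp only [A, Matrix.mul_assoc]
    _ = ∑ j, ∑ l, A j l ^ 2 / ((∑ i, T i j) * ∑ i, T i l) := by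
        refine sum_congr rfl fun j _ => ?_
        rw [Matrix.diag, mul_apply]
        refine sum_congr rfl fun l _ => ?_
        rw [diagonal_mul, diagonal_mul, hA, div_eq_mul_inv, mul_inv]
        ring

end Coupling

section GromovWasserstein

variable {ι κ : Type*} [Fintype κ]

variable (κ) in
def semiCouplings (h : ι → ℝ) : Set (Matrix ι κ ℝ) :=
  {T | (∀ i k, 0 ≤ T i k) ∧ ∀ i, ∑ k, T i k = h i}

theorem convex_semiCouplings (h : ι → ℝ) : Convex ℝ (semiCouplings κ h) := by
  rintro T₀ ⟨hT₀, hT₀h⟩ T₁ ⟨hT₁, hT₁h⟩ a b ha hb hab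
  refine ⟨fun i k => ?_, fun i => ?_⟩
  · simp only [Matrix.add_apply, Matrix.smul_apply, smul_eq_mul]
    have := hT₀ i k
    have := hT₁ i k
    positivity
  · simp only [Matrix.add_apply, Matrix.smul_apply, smul_eq_mul, sum_add_distrib, ← mul_sum,
      hT₀h, hT₁h, ← add_mul, hab, one_mul]

variable [Fintype ι]

def gwCost (C : Matrix ι ι ℝ) (T : Matrix ι κ ℝ) (Cb : Matrix κ κ ℝ) : ℝ :=
  ∑ i, ∑ j, ∑ k, ∑ l, (C i k - Cb j l) ^ 2 * T i j * T k l

theorem gwCost_eq (C : Matrix ι ι ℝ) (T : Matrix ι κ ℝ) (Cb : Matrix κ κ ℝ) :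
    gwCost C T Cb = ∑ i, ∑ k, C i k ^ 2 * (∑ j, T i j) * ∑ l, T k l
      - ∑ j, ∑ l, (2 * Cb j l * (Tᵀ * C * T) j l - ((∑ i, T i j) * ∑ i, T i l) * Cb j l ^ 2) := by
  have hconst : ∑ i, ∑ k, C i k ^ 2 * (∑ j, T i j) * ∑ l, T k l
      = ∑ i, ∑ j, ∑ k, ∑ l, C i k ^ 2 * T i j * T k l := by
    simp only [mul_sum, sum_mul]
    exact sum_congr rfl fun i _ => (sum_congr rfl fun k _ => sum_comm).trans sum_comm
  have hlin : ∑ j, ∑ l, (2 * Cb j l * (Tᵀ * C * T) j l - ((∑ i, T i j) * ∑ i, T i l) * Cb j l ^ 2)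
      = ∑ i, ∑ j, ∑ k, ∑ l, (2 * Cb j l * C i k - Cb j l ^ 2) * T i j * T k l := by
    calc _ = ∑ j, ∑ l, ∑ k, ∑ i, (2 * Cb j l * C i k - Cb j l ^ 2) * T i j * T k l := by
          simp only [mul_apply, transpose_apply, mul_sum, sum_mul, ← sum_sub_distrib]
          refine sum_congr rfl fun j _ => sum_congr rfl fun l _ => sum_congr rfl fun k _ =>
            sum_congr rfl fun i _ => by ring
      _ = ∑ j, ∑ l, ∑ i, ∑ k, (2 * Cb j l * C i k - Cb j l ^ 2) * T i j * T k l :=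
          sum_congr rfl fun j _ => sum_congr rfl fun l _ => sum_comm
      _ = ∑ j, ∑ i, ∑ l, ∑ k, (2 * Cb j l * C i k - Cb j l ^ 2) * T i j * T k l :=
          sum_congr rfl fun j _ => sum_comm
      _ = ∑ i, ∑ j, ∑ l, ∑ k, (2 * Cb j l * C i k - Cb j l ^ 2) * T i j * T k l := sum_comm
      _ = _ := sum_congr rfl fun i _ => sum_congr rfl fun j _ => sum_comm
  rw [hconst, hlin, gwCost, ← sum_sub_distrib]
  simp only [← sum_sub_distrib]
  refine sum_congr rfl fun i _ => sum_congr rfl fun j _ => sum_congr rfl fun k _ =>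
    sum_congr rfl fun l _ => ?_
  ring

theorem iInf_gwCost {T : Matrix ι κ ℝ} (hT : ∀ i j, 0 ≤ T i j) (C : Matrix ι ι ℝ) :
    ⨅ Cb, gwCost C T Cb = ∑ i, ∑ k, C i k ^ 2 * (∑ j, T i j) * ∑ l, T k l
      - ∑ j, ∑ l, (Tᵀ * C * T) j l ^ 2 / ((∑ i, T i j) * ∑ i, T i l) := by
  have hs : ∀ j l, 0 ≤ (∑ i, T i j) * ∑ i, T i l := fun j l =>
    mul_nonneg (sum_nonneg fun i _ => hT i j) (sum_nonneg fun i _ => hT i l)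
  have hA : ∀ j l, (∑ i, T i j) * ∑ i, T i l = 0 → (Tᵀ * C * T) j l = 0 := fun _ _ =>
    transpose_mul_mul_apply_eq_zero hT C
  refine (IsLeast.isGLB (s := Set.range (gwCost C T))
    ⟨⟨of fun j l => (Tᵀ * C * T) j l / ((∑ i, T i j) * ∑ i, T i l), ?_⟩, ?_⟩).ciInf_eq
  · simp only [gwCost_eq, of_apply, two_mul_div_mul_sub_mul_div_sq (hA _ _)]
  · rintro _ ⟨Cb, rfl⟩
    rw [gwCost_eq]
    gcongr with j _ l _
    exact two_mul_mul_sub_mul_sq_le_sq_div (hs j l) (hA j l) _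

variable [DecidableEq κ]

theorem Matrix.CondPosSemidef.convexOn_trace_couplingGram {C : Matrix ι ι ℝ}
    (hC : C.CondPosSemidef) (hCs : Cᵀ = C) (h : ι → ℝ) :
    ConvexOn ℝ (semiCouplings κ h) fun T => (couplingGram T * C * couplingGram T * C).trace := by
  refine ⟨convex_semiCouplings h, fun T₀ hT₀ T₁ hT₁ a b ha hb hab => ?_⟩
  have hrow : ∀ {T}, T ∈ semiCouplings κ h → ∀ i, ∑ m, couplingGram T i m = h i :=
    fun hT i => by rw [sum_couplingGram_apply hT.1, hT.2]
  have hT := convex_semiCouplings h hT₀ hT₁ ha hb hab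
  calc _ ≤ ((a • couplingGram T₀ + b • couplingGram T₁) * C
        * (a • couplingGram T₀ + b • couplingGram T₁) * C).trace :=
        (couplingGram_posSemidef hT.1).trace_mul_mul_mul_le hCs
          (posSemidef_smul_couplingGram_add_sub hT₀.1 hT₁.1 ha hb)
    _ ≤ _ := hC.trace_convexComb_le hCs (couplingGram_transpose _) (couplingGram_transpose _)
        (fun i => by rw [hrow hT₀, hrow hT₁]) ha hb hab

end GromovWasserstein

theorem stmt13_general {N n : ℕ} (h : Fin N → ℝ)
    (CX : Matrix (Fin N) (Fin N) ℝ) (hsym : CXᵀ = CX)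
    (hdef : (∀ x : Fin N → ℝ, (∑ i, x i) = 0 → 0 ≤ x ⬝ᵥ CX.mulVec x) ∨
            (∀ x : Fin N → ℝ, (∑ i, x i) = 0 → x ⬝ᵥ CX.mulVec x ≤ 0)) :
    ConcaveOn ℝ
      {T : Matrix (Fin N) (Fin n) ℝ | (∀ i k, 0 ≤ T i k) ∧ ∀ i, ∑ k, T i k = h i}
      (fun T => ⨅ Cb : Matrix (Fin n) (Fin n) ℝ,
        ∑ i, ∑ j, ∑ k, ∑ l, (CX i k - Cb j l) ^ 2 * T i j * T k l) := by
  have hconvex : ConvexOn ℝ (semiCouplings (Fin n) h)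
      fun T => (couplingGram T * CX * couplingGram T * CX).trace := by
    rcases hdef with hC | hC
    · exact Matrix.CondPosSemidef.convexOn_trace_couplingGram hC hsym h
    · have hC' : (-CX).CondPosSemidef := fun x hx => by simpa [neg_mulVec] using hC x hx
      simpa using hC'.convexOn_trace_couplingGram (by rw [transpose_neg, hsym]) h
  refine (hconvex.neg.add_const (∑ i, ∑ k, CX i k ^ 2 * h i * h k)).congr fun T hT => ?_
  change _ = ⨅ Cb, gwCost CX T Cb
  simp only [Pi.add_apply, Pi.neg_apply]
  rw [iInf_gwCost hT.1, trace_couplingGram_mul_mul_mul hsym]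
  simp only [hT.2]
  ring

/-- with `C_X` symmetric and CPD or CND, the function
`G(T) = min_{C̄} ∑ (C_X ik − C̄ jl)² T ij T kl` is concave on the semi-relaxed
coupling polytope `U_n(h)`. -/
theorem stmt13 {N n : ℕ} (h : Fin N → ℝ)
    (hnn : ∀ i, 0 ≤ h i) (hsum : ∑ i, h i = 1)
    (CX : Matrix (Fin N) (Fin N) ℝ) (hsym : CXᵀ = CX)
    (hdef : (∀ x : Fin N → ℝ, (∑ i, x i) = 0 → 0 ≤ x ⬝ᵥ CX.mulVec x) ∨
            (∀ x : Fin N → ℝ, (∑ i, x i) = 0 → x ⬝ᵥ CX.mulVec x ≤ 0)) :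
    ConcaveOn ℝ
      {T : Matrix (Fin N) (Fin n) ℝ | (∀ i k, 0 ≤ T i k) ∧ ∀ i, ∑ k, T i k = h i}
      (fun T => ⨅ Cb : Matrix (Fin n) (Fin n) ℝ,
        ∑ i, ∑ j, ∑ k, ∑ l, (CX i k - Cb j l) ^ 2 * T i j * T k l) :=
  stmt13_general h CX hsym hdef
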